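/- Bhatia-Davis inequality: if a random variable X satisfies a ≤ X ≤ b almost surely, then Var(X) ≤ (b − E[X])(E[X] − a); in particular for X ∈ [0,1], Var(X) ≤ E[X](1 − E[X]) ≤ E[X]. -/

import Mathlib

open MeasureTheory ProbabilityTheory

theorem stmt_13_general {Ω : Type*} [MeasurableSpace Ω] (μ : Measure Ω) [IsProbabilityMeasure μ]
    (X : Ω → ℝ) (hX : MemLp X 2 μ) (a b : ℝ)
    (hbound : ∀ᵐ ω ∂μ, a ≤ X ω ∧ X ω ≤ b) :
    variance X μ ≤ (b - ∫ ω, X ω ∂μ) * ((∫ ω, X ω ∂μ) - a) ∧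
      (a = 0 → b = 1 →
        variance X μ ≤ (∫ ω, X ω ∂μ) * (1 - ∫ ω, X ω ∂μ) ∧
          variance X μ ≤ ∫ ω, X ω ∂μ) := by
  have bhatia_davis := variance_le_sub_mul_sub hbound hX.aemeasurable
  refine ⟨bhatia_davis, ?_⟩
  rintro rfl rfl
  rw [sub_zero, mul_comm] at bhatia_davis
  have mul_one_sub_le : (∫ ω, X ω ∂μ) * (1 - ∫ ω, X ω ∂μ) ≤ ∫ ω, X ω ∂μ := by
    nlinarith [sq_nonneg (∫ ω, X ω ∂μ)]
  exact ⟨bhatia_davis, bhatia_davis.trans mul_one_sub_le⟩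

/-- Bhatia–Davis inequality, and the special case of [0,1]-valued variables. -/
theorem stmt_13 {Ω : Type*} [MeasurableSpace Ω] (μ : Measure Ω) [IsProbabilityMeasure μ]
    (X : Ω → ℝ) (hX : MemLp X 2 μ) (a b : ℝ) (hab : a ≤ b)
    (hbound : ∀ᵐ ω ∂μ, a ≤ X ω ∧ X ω ≤ b) :
    variance X μ ≤ (b - ∫ ω, X ω ∂μ) * ((∫ ω, X ω ∂μ) - a) ∧
      (a = 0 → b = 1 →
        variance X μ ≤ (∫ ω, X ω ∂μ) * (1 - ∫ ω, X ω ∂μ) ∧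
          variance X μ ≤ ∫ ω, X ω ∂μ) :=
  stmt_13_general μ X hX a b hbound
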